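/- (Uhlmann's theorem) Let ρ₀ and ρ₁ be density matrices on a finite-dimensional Hilbert space H_A, and let |ψ₀⟩ be any fixed purification of ρ₀ on H_A ⊗ H_R with dim(H_R) ≥ dim(H_A). Then F²(ρ₀,ρ₁) = max over purifications |ψ₁⟩ of ρ₁ on H_A ⊗ H_R of |⟨ψ₀|ψ₁⟩|². -/

import Mathlib

open Matrix ComplexOrder
open scoped Matrix.Norms.L2Operator Kronecker

noncomputable section

variable {m : Type*} [Fintype m] [DecidableEq m]

/-- A density matrix: positive semidefinite with unit trace. -/
def IsDensity (ρ : Matrix m m ℂ) : Prop := ρ.PosSemidef ∧ ρ.trace = 1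

/-- The square root of a positive semidefinite matrix (removed from Mathlib; old definition). -/
def Matrix.PosSemidef.sqrt {n 𝕜 : Type*} [Fintype n] [DecidableEq n] [RCLike 𝕜]
    {A : Matrix n n 𝕜} (hA : A.PosSemidef) : Matrix n n 𝕜 :=
  hA.1.eigenvectorUnitary.1 * diagonal ((↑) ∘ (√·) ∘ hA.1.eigenvalues) *
    (star hA.1.eigenvectorUnitary : Matrix n n 𝕜)

/-- The trace norm `‖A‖₁ = Tr √(AᴴA)`. -/
def traceNorm (A : Matrix m m ℂ) : ℝ :=
  ((Matrix.posSemidef_conjTranspose_mul_self A).sqrt).trace.re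

/-- The trace distance `T(ρ,σ) = ‖ρ − σ‖₁ / 2`. -/
def traceDist (ρ σ : Matrix m m ℂ) : ℝ := traceNorm (ρ - σ) / 2

/-- The fidelity `F(ρ,σ) = ‖√ρ √σ‖₁`. -/
def fid {ρ σ : Matrix m m ℂ} (hρ : ρ.PosSemidef) (hσ : σ.PosSemidef) : ℝ :=
  traceNorm (hρ.sqrt * hσ.sqrt)

/-- The sign function applied to a Hermitian matrix via its spectral decomposition. -/
def signMat {A : Matrix m m ℂ} (hA : A.IsHermitian) : Matrix m m ℂ :=
  hA.cfc (fun x => Real.sign x)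

/-- The outer product `|ψ⟩⟨φ|`. -/
def outer (ψ φ : m → ℂ) : Matrix m m ℂ := Matrix.vecMulVec ψ (star φ)

variable {α β : Type*} [Fintype α] [DecidableEq α] [Fintype β] [DecidableEq β]

/-- Partial trace over the first (A) factor. -/
def ptraceA (M : Matrix (α × β) (α × β) ℂ) : Matrix β β ℂ :=
  Matrix.of fun r r' => ∑ a, M (a, r) (a, r')

/-- Partial trace over the second (R) factor. -/
def ptraceR (M : Matrix (α × β) (α × β) ℂ) : Matrix α α ℂ :=
  Matrix.of fun a a' => ∑ r, M (a, r) (a', r)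

theorem Matrix.IsHermitian.star_mul_self_mul_eq_diagonal {n 𝕜 : Type*} [Fintype n]
    [DecidableEq n] [RCLike 𝕜] {A : Matrix n n 𝕜} (hA : A.IsHermitian) :
    star (hA.eigenvectorUnitary : Matrix n n 𝕜) * A * (hA.eigenvectorUnitary : Matrix n n 𝕜)
      = diagonal (RCLike.ofReal ∘ hA.eigenvalues) := by
  have := hA.conjStarAlgAut_star_eigenvectorUnitary
  simpa [Unitary.conjStarAlgAut_apply] using this

theorem Matrix.PosSemidef.sqrt_eq_cfc' {n 𝕜 : Type*} [Fintype n] [DecidableEq n] [RCLike 𝕜]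
    {A : Matrix n n 𝕜} (hA : A.PosSemidef) : hA.sqrt = cfc Real.sqrt A := by
  rw [hA.1.cfc_eq]; rfl

theorem Matrix.PosSemidef.posSemidef_sqrt {n 𝕜 : Type*} [Fintype n] [DecidableEq n] [RCLike 𝕜]
    {A : Matrix n n 𝕜} (hA : A.PosSemidef) : hA.sqrt.PosSemidef := by
  unfold Matrix.PosSemidef.sqrt
  rw [star_eq_conjTranspose]
  exact (posSemidef_diagonal_iff.mpr fun i => by
    simp [Real.sqrt_nonneg]).mul_mul_conjTranspose_same _

theorem Matrix.PosSemidef.sqrt_mul_self {n 𝕜 : Type*} [Fintype n] [DecidableEq n] [RCLike 𝕜]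
    {A : Matrix n n 𝕜} (hA : A.PosSemidef) : hA.sqrt * hA.sqrt = A := by
  have hU : (star hA.1.eigenvectorUnitary : Matrix n n 𝕜) * hA.1.eigenvectorUnitary = 1 :=
    Unitary.coe_star_mul_self _
  have hD : diagonal (((↑) ∘ (√·) ∘ hA.1.eigenvalues) : n → 𝕜) *
      diagonal (((↑) ∘ (√·) ∘ hA.1.eigenvalues) : n → 𝕜)
      = diagonal (RCLike.ofReal ∘ hA.1.eigenvalues) := by
    rw [diagonal_mul_diagonal]; congr 1; funext i
    simp only [Function.comp_apply]
    rw [← RCLike.ofReal_mul, Real.mul_self_sqrt (hA.eigenvalues_nonneg i)]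
  conv_rhs => rw [hA.1.spectral_theorem, Unitary.conjStarAlgAut_apply]
  unfold Matrix.PosSemidef.sqrt
  rw [← hD]
  simp only [Matrix.mul_assoc]
  rw [← Matrix.mul_assoc (star _ : Matrix n n 𝕜) (hA.1.eigenvectorUnitary : Matrix n n 𝕜), hU,
    Matrix.one_mul]

open scoped MatrixOrder in
theorem Matrix.PosSemidef.eq_sqrt_of_sq_eq {n 𝕜 : Type*} [Fintype n] [DecidableEq n] [RCLike 𝕜]
    {A : Matrix n n 𝕜} (hA : A.PosSemidef) (B : Matrix n n 𝕜) {hB : B.PosSemidef}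
    (hAB : A ^ 2 = B) : A = hB.sqrt := by
  rw [hB.sqrt_eq_cfc', ← cfcₙ_eq_cfc (hf0 := Real.sqrt_zero), ← CFC.sqrt_eq_real_sqrt B hB.nonneg]
  exact (CFC.sqrt_unique (by rw [← pow_two]; exact hAB) hA.nonneg).symm

/-- Isometry factorization: `N = T √(NᴴN)` with `Tᴴ T = 1`. -/
lemma exists_isometry_factor (hcard : Fintype.card α ≤ Fintype.card β)
    (N : Matrix β α ℂ) :
    ∃ T : Matrix β α ℂ, Tᴴ * T = 1 ∧
      N = T * (Matrix.posSemidef_conjTranspose_mul_self N).sqrt := by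
  classical
  have hρ : (Nᴴ * N).PosSemidef := Matrix.posSemidef_conjTranspose_mul_self N
  set d : α → ℝ := hρ.1.eigenvalues with hd
  set U : Matrix α α ℂ := (hρ.1.eigenvectorUnitary : Matrix α α ℂ) with hU
  have hdnn : ∀ i, 0 ≤ d i := hρ.eigenvalues_nonneg
  have hUU : star U * U = 1 := Matrix.mem_unitaryGroup_iff'.mp hρ.1.eigenvectorUnitary.2
  have hUU' : U * star U = 1 := Matrix.mem_unitaryGroup_iff.mp hρ.1.eigenvectorUnitary.2
  set X : Matrix β α ℂ := N * U with hX
  have hXX : Xᴴ * X = diagonal (RCLike.ofReal ∘ d) := by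
    have h1 : Xᴴ * X = star U * (Nᴴ * N) * U := by
      rw [hX, conjTranspose_mul, star_eq_conjTranspose]
      simp only [Matrix.mul_assoc]
    rw [h1, hρ.1.star_mul_self_mul_eq_diagonal]
  set p : α → ℂ := fun i => if d i = 0 then (0 : ℂ) else 1 with hp
  set P : Matrix α α ℂ := diagonal p with hP
  -- columns of X with zero eigenvalue vanish
  have hXP : X * P = X := by
    have hz : (X * (1 - P))ᴴ * (X * (1 - P)) = 0 := by
      have e0 : (X * (1 - P))ᴴ * (X * (1 - P))
          = (1 - P)ᴴ * (diagonal (RCLike.ofReal ∘ d) * (1 - P)) := by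
        rw [conjTranspose_mul, ← hXX]
        simp only [Matrix.mul_assoc]
      rw [e0]
      have h1P : (1 : Matrix α α ℂ) - P = diagonal (fun i => 1 - p i) := by
        rw [hP, ← diagonal_one, diagonal_sub]
      rw [h1P, diagonal_conjTranspose]
      rw [diagonal_mul_diagonal, diagonal_mul_diagonal]

      ext i j
      by_cases h : i = j
      · subst h
        by_cases h2 : d i = 0 <;> simp [hp, h2, Function.comp]
      · simp [diagonal_apply_ne _ h]
    have h0 := conjTranspose_mul_self_eq_zero.mp hz
    rw [Matrix.mul_sub, Matrix.mul_one, sub_eq_zero] at h0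
    exact h0.symm
  -- orthogonal complement construction
  set colX : α → EuclideanSpace ℂ β := fun j => WithLp.toLp 2 (fun r => X r j) with hcol
  have hcolzero : ∀ (r : β) (j : α), d j = 0 → X r j = 0 := by
    intro r j hj
    have h1 : (X * P) r j = X r j := by rw [hXP]
    rw [hP, mul_diagonal, hp] at h1
    simpa [hj] using h1.symm
  set Csub : Submodule ℂ (EuclideanSpace ℂ β) := (Submodule.span ℂ (Set.range colX))ᗮ with hC
  have hcards : Fintype.card {i // d i = 0} ≤ Module.finrank ℂ Csub := by
    have h1 : Module.finrank ℂ (Submodule.span ℂ (Set.range colX))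
        ≤ Fintype.card {j // ¬ (d j = 0)} := by
      have hle : Submodule.span ℂ (Set.range colX)
          ≤ Submodule.span ℂ (Set.range (fun j : {j // ¬ (d j = 0)} => colX j.1)) := by
        rw [Submodule.span_le]
        rintro x ⟨j, rfl⟩
        by_cases hj : d j = 0
        · have hz : colX j = 0 := PiLp.ext fun r => hcolzero r j hj
          rw [hz]; exact Submodule.zero_mem _
        · exact Submodule.subset_span ⟨⟨j, hj⟩, rfl⟩
      exact le_trans (Submodule.finrank_mono hle) (finrank_range_le_card _)
    have h2 := (Submodule.span ℂ (Set.range colX)).finrank_add_finrank_orthogonal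
    rw [finrank_euclideanSpace] at h2
    have h4 : Fintype.card {i // d i = 0} + Fintype.card {j // ¬ (d j = 0)}
        = Fintype.card α := by
      rw [Fintype.card_subtype, Fintype.card_subtype]
      exact Finset.card_filter_add_card_filter_not _
    rw [hC]
    omega
  obtain ⟨ee⟩ : Nonempty ({i // d i = 0} ↪ Fin (Module.finrank ℂ Csub)) :=
    Function.Embedding.nonempty_of_card_le (by simpa using hcards)
  set b := stdOrthonormalBasis ℂ Csub with hb
  set g : {i // d i = 0} → EuclideanSpace ℂ β := fun i => (b (ee i) : EuclideanSpace ℂ β) with hg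
  have hinner_sum : ∀ x y : EuclideanSpace ℂ β,
      inner ℂ x y = ∑ r, (starRingEnd ℂ) (x r) * y r := by
    intro x y; rw [PiLp.inner_apply]; simp [RCLike.inner_apply, mul_comm]
  have hginner : ∀ i j, inner ℂ (g i) (g j) = if i = j then 1 else 0 := by
    intro i j
    rw [hg]
    simp only
    rw [← Submodule.coe_inner, orthonormal_iff_ite.mp b.orthonormal]
    simp [EmbeddingLike.apply_eq_iff_eq]
  have hgC : ∀ i, g i ∈ Csub := fun i => (b (ee i)).2
  set G : Matrix β α ℂ := Matrix.of (fun r i => if h : d i = 0 then g ⟨i, h⟩ r else 0) with hG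
  have hGX : Gᴴ * X = 0 := by
    ext i j
    simp only [Matrix.mul_apply, conjTranspose_apply, Matrix.zero_apply, hG, Matrix.of_apply]
    by_cases h : d i = 0
    · simp only [dif_pos h]
      have hmem : colX j ∈ Submodule.span ℂ (Set.range colX) := Submodule.subset_span ⟨j, rfl⟩
      have horth := (Submodule.mem_orthogonal' _ _).mp (hgC ⟨i, h⟩) (colX j) hmem
      rw [hinner_sum] at horth
      simpa [hcol, RCLike.star_def] using horth
    · simp [h]
  have hGG : Gᴴ * G = 1 - P := by
    have h1P : (1 : Matrix α α ℂ) - P = diagonal (fun i => 1 - p i) := by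
      rw [hP, ← diagonal_one, diagonal_sub]
    rw [h1P]
    ext i j
    simp only [Matrix.mul_apply, conjTranspose_apply, hG, Matrix.of_apply]
    by_cases hij : i = j
    · subst hij
      rw [diagonal_apply_eq]
      by_cases h : d i = 0
      · have hii := hginner ⟨i, h⟩ ⟨i, h⟩
        rw [hinner_sum, if_pos rfl] at hii
        simp only [dif_pos h]
        rw [hp]
        simp only [if_pos h, sub_zero]
        simpa [RCLike.star_def] using hii
      · simp [h, hp]
    · rw [diagonal_apply_ne _ hij]
      by_cases hi : d i = 0
      · by_cases hj : d j = 0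
        · have hij2 := hginner ⟨i, hi⟩ ⟨j, hj⟩
          rw [hinner_sum] at hij2
          have hne : (⟨i, hi⟩ : {k // d k = 0}) ≠ ⟨j, hj⟩ := by simp [hij]
          rw [if_neg hne] at hij2
          simp only [dif_pos hi, dif_pos hj]
          simpa [RCLike.star_def] using hij2
        · simp [hi, hj]
      · simp [hi]
  -- the diagonal pieces
  set Dp : Matrix α α ℂ := diagonal (fun i => if d i = 0 then (0:ℂ) else ((Real.sqrt (d i) : ℝ) : ℂ)⁻¹) with hDp
  set Dsq : Matrix α α ℂ := diagonal (RCLike.ofReal ∘ Real.sqrt ∘ d) with hDsq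
  have hsqrt : (Matrix.posSemidef_conjTranspose_mul_self N).sqrt = U * Dsq * star U := by
    refine (Matrix.PosSemidef.eq_sqrt_of_sq_eq ?_ _ ?_).symm
    · rw [star_eq_conjTranspose]
      exact (posSemidef_diagonal_iff.mpr (fun i => by
        simpa using RCLike.ofReal_nonneg.mpr (Real.sqrt_nonneg (d i)))).mul_mul_conjTranspose_same U
    · rw [pow_two]
      calc U * Dsq * star U * (U * Dsq * star U)
          = U * (Dsq * (star U * U) * Dsq) * star U := by simp only [Matrix.mul_assoc]
        _ = U * (Dsq * Dsq) * star U := by rw [hUU, Matrix.mul_one]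
        _ = U * diagonal (RCLike.ofReal ∘ d) * star U := by
            rw [hDsq, diagonal_mul_diagonal]
            refine congrArg (fun D => U * D * star U) (congrArg diagonal (funext fun i => ?_))
            simp only [Function.comp_apply]
            rw [← RCLike.ofReal_mul, Real.mul_self_sqrt (hdnn i)]
        _ = Nᴴ * N := (hρ.1.spectral_theorem).symm
  have hDpDsq : Dp * Dsq = P := by
    rw [hDp, hDsq, diagonal_mul_diagonal, hP, hp]
    refine congrArg diagonal (funext fun i => ?_)
    simp only [Pi.mul_apply, Function.comp_apply]
    by_cases h : d i = 0
    · simp [h]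
    · have hs : Real.sqrt (d i) ≠ 0 :=
        Real.sqrt_ne_zero'.mpr (lt_of_le_of_ne (hdnn i) (Ne.symm h))
      rw [if_neg h, if_neg h,
        show ((RCLike.ofReal (Real.sqrt (d i))) : ℂ) = ((Real.sqrt (d i) : ℝ) : ℂ) from rfl,
        inv_mul_cancel₀ (by exact_mod_cast hs)]
  have hGDsq : G * Dsq = 0 := by
    ext r j
    rw [hDsq, mul_diagonal]
    simp only [hG, Matrix.of_apply, Matrix.zero_apply, Function.comp]
    by_cases h : d j = 0
    · simp [h, Real.sqrt_eq_zero', le_refl]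
    · simp [h]
  set W : Matrix β α ℂ := X * Dp + G with hW
  have hWD : W * Dsq = X := by
    rw [hW, Matrix.add_mul, Matrix.mul_assoc, hDpDsq, hXP, hGDsq, add_zero]
  have hXG : Xᴴ * G = 0 := by
    have h := congrArg conjTranspose hGX
    simpa using h
  have hDpH : Dpᴴ = Dp := by
    rw [hDp, diagonal_conjTranspose]
    refine congrArg diagonal (funext fun i => ?_)
    by_cases h : d i = 0 <;> simp [h, Pi.star_apply, star_inv₀]
  have hDdD : Dp * diagonal (RCLike.ofReal ∘ d) * Dp = P := by
    rw [hDp, hP, hp, diagonal_mul_diagonal, diagonal_mul_diagonal]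
    refine congrArg diagonal (funext fun i => ?_)
    simp only [Pi.mul_apply, Function.comp_apply]
    by_cases h : d i = 0
    · simp [h]
    · have hs : Real.sqrt (d i) ≠ 0 :=
        Real.sqrt_ne_zero'.mpr (lt_of_le_of_ne (hdnn i) (Ne.symm h))
      rw [if_neg h, if_neg h,
        show ((RCLike.ofReal (d i)) : ℂ) = ((d i : ℝ) : ℂ) from rfl,
        show ((d i : ℝ) : ℂ) = ((Real.sqrt (d i) : ℝ) : ℂ) * ((Real.sqrt (d i) : ℝ) : ℂ) from by
          rw [← Complex.ofReal_mul, Real.mul_self_sqrt (hdnn i)]]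
      field_simp
  have hWW : Wᴴ * W = 1 := by
    have expand : Wᴴ * W
        = Dpᴴ * (Xᴴ * X) * Dp + Dpᴴ * (Xᴴ * G) + (Gᴴ * X) * Dp + Gᴴ * G := by
      rw [hW, conjTranspose_add, conjTranspose_mul]
      simp only [Matrix.add_mul, Matrix.mul_add, Matrix.mul_assoc, add_assoc]
      abel
    rw [expand, hXX, hXG, hGX, hGG, Matrix.mul_zero, Matrix.zero_mul, add_zero, add_zero,
      hDpH, hDdD]
    abel
  refine ⟨W * star U, ?_, ?_⟩
  · rw [conjTranspose_mul, star_eq_conjTranspose, conjTranspose_conjTranspose]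
    calc U * Wᴴ * (W * Uᴴ) = U * (Wᴴ * W) * Uᴴ := by simp only [Matrix.mul_assoc]
      _ = 1 := by rw [hWW, Matrix.mul_one, ← star_eq_conjTranspose, hUU']
  · rw [hsqrt]
    calc N = X * star U := by rw [hX, Matrix.mul_assoc, hUU', Matrix.mul_one]
      _ = W * Dsq * star U := by rw [hWD]
      _ = W * (star U * U) * Dsq * star U := by rw [hUU, Matrix.mul_one]
      _ = W * star U * (U * Dsq * star U) := by simp only [Matrix.mul_assoc]

/-- coisometry factorization -/
lemma exists_coisometry_factor (hcard : Fintype.card α ≤ Fintype.card β)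
    (M : Matrix α β ℂ) {ρ : Matrix α α ℂ} (hρ : ρ.PosSemidef) (hMρ : M * Mᴴ = ρ) :
    ∃ E : Matrix α β ℂ, E * Eᴴ = 1 ∧ M = hρ.sqrt * E := by
  obtain ⟨T, hTT, hN⟩ := exists_isometry_factor hcard Mᴴ
  have hsq : (Matrix.posSemidef_conjTranspose_mul_self Mᴴ).sqrt = hρ.sqrt := by
    refine Matrix.PosSemidef.eq_sqrt_of_sq_eq
      (Matrix.posSemidef_conjTranspose_mul_self Mᴴ).posSemidef_sqrt _ ?_
    rw [pow_two, Matrix.PosSemidef.sqrt_mul_self, conjTranspose_conjTranspose, hMρ]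
  refine ⟨Tᴴ, by rw [conjTranspose_conjTranspose]; exact hTT, ?_⟩
  rw [hsq] at hN
  have h := congrArg conjTranspose hN
  have hherm : (hρ.sqrt)ᴴ = hρ.sqrt := hρ.posSemidef_sqrt.1
  rw [conjTranspose_conjTranspose, conjTranspose_mul, hherm] at h
  exact h

lemma psd_trace_real {A : Matrix α α ℂ} (hA : A.PosSemidef) : A.trace = (A.trace.re : ℂ) := by
  have h := Matrix.trace_conjTranspose A
  rw [hA.1] at h
  have h2 : (starRingEnd ℂ) A.trace = A.trace := by
    rw [← RCLike.star_def]; exact h.symm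
  exact (Complex.conj_eq_iff_re.mp h2).symm

lemma psd_trace_re_nonneg {A : Matrix α α ℂ} (hA : A.PosSemidef) : 0 ≤ A.trace.re := by
  have hre : A.trace.re = ∑ i, (A i i).re := by
    rw [Matrix.trace]; exact Complex.re_sum _ _
  rw [hre]
  refine Finset.sum_nonneg fun i _ => ?_
  have h := hA.re_dotProduct_nonneg (Pi.single i 1)
  have hdd : dotProduct (star (Pi.single i 1)) (A *ᵥ Pi.single i 1) = A i i := by
    have hs : (star (Pi.single i 1) : α → ℂ) = Pi.single i 1 := by
      funext k; by_cases hk : k = i <;> simp [Pi.single_apply, hk]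
    rw [hs]
    simp [dotProduct, Matrix.mulVec, Pi.single_apply, mul_ite, ite_mul,
      mul_one, mul_zero, zero_mul, Finset.sum_ite_eq, Finset.sum_ite_eq']
  rw [hdd] at h
  simpa using h

lemma trace_conj_inner (A B : Matrix α α ℂ) :
    @inner ℂ (EuclideanSpace ℂ (α × α)) _ (WithLp.toLp 2 fun p : α × α => A p.1 p.2)
      (WithLp.toLp 2 fun p : α × α => B p.1 p.2)
      = (Aᴴ * B).trace := by
  rw [PiLp.inner_apply]
  simp only [RCLike.inner_apply']
  rw [Matrix.trace, Fintype.sum_prod_type, Finset.sum_comm]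
  simp [Matrix.mul_apply, Matrix.diag, Matrix.conjTranspose_apply, RCLike.star_def]

lemma trace_abs_sq_le (A B : Matrix α α ℂ) :
    ‖(Aᴴ * B).trace‖ ^ 2 ≤ (Aᴴ * A).trace.re * (Bᴴ * B).trace.re := by
  set va : EuclideanSpace ℂ (α × α) := WithLp.toLp 2 fun p : α × α => A p.1 p.2 with hva
  set vb : EuclideanSpace ℂ (α × α) := WithLp.toLp 2 fun p : α × α => B p.1 p.2 with hvb
  have hna : ‖va‖ ^ 2 = (Aᴴ * A).trace.re := by
    rw [← inner_self_eq_norm_sq (𝕜 := ℂ) va]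
    rw [show inner ℂ va va = (Aᴴ * A).trace from trace_conj_inner A A]
    simp
  have hnb : ‖vb‖ ^ 2 = (Bᴴ * B).trace.re := by
    rw [← inner_self_eq_norm_sq (𝕜 := ℂ) vb]
    rw [show inner ℂ vb vb = (Bᴴ * B).trace from trace_conj_inner B B]
    simp
  calc ‖(Aᴴ * B).trace‖ ^ 2
      = ‖inner ℂ va vb‖ ^ 2 := by
        rw [trace_conj_inner A B]
    _ ≤ (‖va‖ * ‖vb‖) ^ 2 := by
        have := norm_inner_le_norm (𝕜 := ℂ) va vb
        exact pow_le_pow_left₀ (norm_nonneg _) this 2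
    _ = ‖va‖ ^ 2 * ‖vb‖ ^ 2 := by ring
    _ = (Aᴴ * A).trace.re * (Bᴴ * B).trace.re := by rw [hna, hnb]

/-- trace-norm/operator-norm duality upper bound -/
lemma trace_mul_le_of_contraction {S K : Matrix α α ℂ} (hQ : (S * Sᴴ).PosSemidef)
    (E : Matrix α α ℂ) (hSE : S = hQ.sqrt * E) (hE : E * Eᴴ = 1)
    (hK : (1 - K * Kᴴ).PosSemidef) :
    ‖(S * K).trace‖ ^ 2 ≤ (hQ.sqrt.trace.re) ^ 2 := by
  set Q := hQ.sqrt with hQdef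
  have hQpsd : Q.PosSemidef := hQ.posSemidef_sqrt
  set T := hQpsd.sqrt with hTdef
  have hT : T * T = Q := hQpsd.sqrt_mul_self
  have hTh : Tᴴ = T := hQpsd.posSemidef_sqrt.1
  have h1 : S * K = Tᴴ * (T * (E * K)) := by
    rw [hTh, ← Matrix.mul_assoc, hT, hSE, Matrix.mul_assoc]
  have hcs := trace_abs_sq_le T (T * (E * K))
  rw [← h1] at hcs
  have hTT : Tᴴ * T = Q := by rw [hTh, hT]
  rw [hTT] at hcs
  have h2 : ((T * (E * K))ᴴ * (T * (E * K))).trace.re ≤ Q.trace.re := by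
    have e1 : ((T * (E * K))ᴴ * (T * (E * K))).trace
        = ((T * E) * (K * Kᴴ) * (T * E)ᴴ).trace := by
      rw [Matrix.trace_mul_comm]
      simp only [Matrix.conjTranspose_mul, Matrix.mul_assoc]
    have e2 : ((T * E) * (K * Kᴴ) * (T * E)ᴴ).trace
        = ((T * E) * (T * E)ᴴ).trace - ((T * E) * (1 - K * Kᴴ) * (T * E)ᴴ).trace := by
      rw [Matrix.mul_sub, Matrix.mul_one, Matrix.sub_mul, Matrix.trace_sub]
      ring
    have e3 : ((T * E) * (T * E)ᴴ).trace = Q.trace := by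
      have : (T * E) * (T * E)ᴴ = T * Tᴴ := by
        rw [Matrix.conjTranspose_mul]
        calc T * E * (Eᴴ * Tᴴ) = T * (E * Eᴴ) * Tᴴ := by simp only [Matrix.mul_assoc]
          _ = T * Tᴴ := by rw [hE, Matrix.mul_one]
      rw [this, hTh, hT]
    have e4 : 0 ≤ ((T * E) * (1 - K * Kᴴ) * (T * E)ᴴ).trace.re :=
      psd_trace_re_nonneg (hK.mul_mul_conjTranspose_same (T * E))
    rw [e1, e2, Complex.sub_re, e3]
    linarith
  have h0 : 0 ≤ Q.trace.re := psd_trace_re_nonneg hQpsd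
  calc ‖(S * K).trace‖ ^ 2
      ≤ Q.trace.re * ((T * (E * K))ᴴ * (T * (E * K))).trace.re := hcs
    _ ≤ Q.trace.re * Q.trace.re := mul_le_mul_of_nonneg_left h2 h0
    _ = Q.trace.re ^ 2 := by ring

lemma dot_eq_trace (φ χ : α × β → ℂ) :
    star φ ⬝ᵥ χ
      = ((Matrix.of fun a r => φ (a, r))ᴴ * (Matrix.of fun a r => χ (a, r))).trace := by
  simp only [dotProduct, Matrix.trace, Matrix.diag, Matrix.mul_apply,
    Matrix.conjTranspose_apply, Matrix.of_apply, Pi.star_apply, Fintype.sum_prod_type]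
  rw [Finset.sum_comm]

lemma ptrace_outer_eq (φ : α × β → ℂ) :
    ptraceR (outer φ φ)
      = (Matrix.of fun a r => φ (a, r)) * (Matrix.of fun a r => φ (a, r))ᴴ := by
  ext a a'
  simp [ptraceR, outer, Matrix.mul_apply, Matrix.conjTranspose_apply,
    Matrix.vecMulVec_apply]

/-- Uhlmann's theorem: for a fixed purification `ψ₀` of `ρ₀`,
`F²(ρ₀,ρ₁)` is the maximum of `|⟨ψ₀|ψ₁⟩|²` over purifications `ψ₁` of `ρ₁`. -/
theorem uhlmann
    (hcard : Fintype.card α ≤ Fintype.card β)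
    {ρ₀ ρ₁ : Matrix α α ℂ} (h₀ : IsDensity ρ₀) (h₁ : IsDensity ρ₁)
    (ψ₀ : α × β → ℂ) (hψ₀unit : star ψ₀ ⬝ᵥ ψ₀ = 1)
    (hψ₀ : ptraceR (outer ψ₀ ψ₀) = ρ₀) :
    IsGreatest {x : ℝ | ∃ ψ₁ : α × β → ℂ, star ψ₁ ⬝ᵥ ψ₁ = 1 ∧
        ptraceR (outer ψ₁ ψ₁) = ρ₁ ∧ x = (‖star ψ₀ ⬝ᵥ ψ₁‖) ^ 2}
      ((fid h₀.1 h₁.1) ^ 2) := by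
  classical
  set S : Matrix α α ℂ := h₀.1.sqrt * h₁.1.sqrt with hSdef
  have hQ : (S * Sᴴ).PosSemidef := Matrix.posSemidef_self_mul_conjTranspose S
  obtain ⟨Ep, hEp, hSpolar⟩ := exists_coisometry_factor (le_refl _) S hQ rfl
  set Q : Matrix α α ℂ := hQ.sqrt with hQdef
  have hQpsd : Q.PosSemidef := hQ.posSemidef_sqrt
  have hQh : Qᴴ = Q := hQpsd.1
  have hEp' : Epᴴ * Ep = 1 := mul_eq_one_comm.mp hEp
  -- fid = Q.trace.re
  have h1' : (Matrix.posSemidef_conjTranspose_mul_self S).sqrt = Epᴴ * Q * Ep := by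
    refine (Matrix.PosSemidef.eq_sqrt_of_sq_eq
      (hQpsd.conjTranspose_mul_mul_same Ep) _ ?_).symm
    rw [pow_two]
    have e : Sᴴ * S = Epᴴ * (Q * Q) * Ep := by
      rw [hSpolar, conjTranspose_mul, hQh]
      simp only [Matrix.mul_assoc]
    rw [e]
    calc Epᴴ * Q * Ep * (Epᴴ * Q * Ep)
        = Epᴴ * (Q * (Ep * Epᴴ) * Q) * Ep := by simp only [Matrix.mul_assoc]
      _ = Epᴴ * (Q * (1 : Matrix α α ℂ) * Q) * Ep := by rw [hEp]
      _ = Epᴴ * (Q * Q) * Ep := by rw [Matrix.mul_one]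
  have hfidQ : fid h₀.1 h₁.1 = Q.trace.re := by
    show ((Matrix.posSemidef_conjTranspose_mul_self (h₀.1.sqrt * h₁.1.sqrt)).sqrt).trace.re
      = Q.trace.re
    rw [← hSdef, h1', Matrix.trace_mul_cycle, hEp, Matrix.one_mul]
  have hQre : Q.trace = (Q.trace.re : ℂ) := psd_trace_real hQpsd
  have hQnn : 0 ≤ Q.trace.re := psd_trace_re_nonneg hQpsd
  -- purification ψ₀ as a matrix
  set M₀ : Matrix α β ℂ := Matrix.of (fun a r => ψ₀ (a, r)) with hM₀def
  have hM₀ : M₀ * M₀ᴴ = ρ₀ := by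
    rw [hM₀def, ← ptrace_outer_eq ψ₀]; exact hψ₀
  obtain ⟨E₀, hE₀, hM₀f⟩ := exists_coisometry_factor hcard M₀ h₀.1 hM₀
  have hT0h : (h₀.1.sqrt)ᴴ = h₀.1.sqrt := h₀.1.posSemidef_sqrt.1
  have hT1h : (h₁.1.sqrt)ᴴ = h₁.1.sqrt := h₁.1.posSemidef_sqrt.1
  constructor
  · -- membership: an optimal purification of ρ₁
    set M₁ : Matrix α β ℂ := h₁.1.sqrt * Epᴴ * E₀ with hM₁def
    have hM₁M₁ : M₁ * M₁ᴴ = ρ₁ := by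
      rw [hM₁def, conjTranspose_mul, conjTranspose_mul, conjTranspose_conjTranspose, hT1h]
      calc h₁.1.sqrt * Epᴴ * E₀ * (E₀ᴴ * (Ep * h₁.1.sqrt))
          = h₁.1.sqrt * Epᴴ * (E₀ * E₀ᴴ) * (Ep * h₁.1.sqrt) := by simp only [Matrix.mul_assoc]
        _ = h₁.1.sqrt * Epᴴ * (Ep * h₁.1.sqrt) := by rw [hE₀, Matrix.mul_one]
        _ = h₁.1.sqrt * (Epᴴ * Ep) * h₁.1.sqrt := by simp only [Matrix.mul_assoc]
        _ = h₁.1.sqrt * h₁.1.sqrt := by rw [hEp', Matrix.mul_one]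
        _ = ρ₁ := h₁.1.sqrt_mul_self
    refine ⟨fun p => M₁ p.1 p.2, ?_, ?_, ?_⟩
    · rw [dot_eq_trace]
      rw [show (Matrix.of fun a r => (fun p : α × β => M₁ p.1 p.2) (a, r)) = M₁ from rfl]
      rw [Matrix.trace_mul_comm, hM₁M₁, h₁.2]
    · rw [ptrace_outer_eq]
      rw [show (Matrix.of fun a r => (fun p : α × β => M₁ p.1 p.2) (a, r)) = M₁ from rfl]
      exact hM₁M₁
    · have hval : star ψ₀ ⬝ᵥ (fun p : α × β => M₁ p.1 p.2) = Q.trace := by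
        rw [dot_eq_trace]
        rw [show (Matrix.of fun a r => (fun p : α × β => M₁ p.1 p.2) (a, r)) = M₁ from rfl]
        rw [show (Matrix.of fun a r => ψ₀ (a, r)) = M₀ from hM₀def.symm]
        rw [hM₀f, hM₁def]
        have e : (h₀.1.sqrt * E₀)ᴴ * (h₁.1.sqrt * Epᴴ * E₀)
            = E₀ᴴ * (h₀.1.sqrt * (h₁.1.sqrt * Epᴴ)) * E₀ := by
          rw [conjTranspose_mul, hT0h]
          simp only [Matrix.mul_assoc]
        rw [e, Matrix.trace_mul_cycle, hE₀, Matrix.one_mul]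
        have e2 : h₀.1.sqrt * (h₁.1.sqrt * Epᴴ) = S * Epᴴ := by
          rw [hSdef]; simp only [Matrix.mul_assoc]
        rw [e2, hSpolar, Matrix.mul_assoc, hEp, Matrix.mul_one]
      rw [hval, hQre, Complex.norm_real, Real.norm_eq_abs, abs_of_nonneg hQnn, hfidQ]
  · -- upper bound
    rintro x ⟨ψ₁, hunit, hpt, rfl⟩
    set M₁ : Matrix α β ℂ := Matrix.of (fun a r => ψ₁ (a, r)) with hM₁def
    have hM₁ : M₁ * M₁ᴴ = ρ₁ := by
      rw [hM₁def, ← ptrace_outer_eq ψ₁]; exact hpt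
    obtain ⟨E₁, hE₁, hM₁f⟩ := exists_coisometry_factor hcard M₁ h₁.1 hM₁
    have hP0 : (1 - E₀ᴴ * E₀).PosSemidef := by
      have hh : (1 - E₀ᴴ * E₀)ᴴ = 1 - E₀ᴴ * E₀ := by
        rw [conjTranspose_sub, conjTranspose_one, conjTranspose_mul, conjTranspose_conjTranspose]
      have hfix : (1 - E₀ᴴ * E₀)ᴴ * (1 - E₀ᴴ * E₀) = 1 - E₀ᴴ * E₀ := by
        rw [hh, Matrix.sub_mul, Matrix.mul_sub, Matrix.mul_sub, Matrix.one_mul, Matrix.mul_one]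
        have e : E₀ᴴ * E₀ * (E₀ᴴ * E₀) = E₀ᴴ * E₀ := by
          calc E₀ᴴ * E₀ * (E₀ᴴ * E₀) = E₀ᴴ * (E₀ * E₀ᴴ) * E₀ := by simp only [Matrix.mul_assoc]
            _ = E₀ᴴ * E₀ := by rw [hE₀, Matrix.mul_one]
        rw [e]
        simp only [Matrix.one_mul, Matrix.mul_one]
        abel
      rw [← hfix]
      exact Matrix.posSemidef_conjTranspose_mul_self _
    have hKK : (1 - (E₁ * E₀ᴴ) * (E₁ * E₀ᴴ)ᴴ).PosSemidef := by
      have e : 1 - (E₁ * E₀ᴴ) * (E₁ * E₀ᴴ)ᴴ = E₁ * (1 - E₀ᴴ * E₀) * E₁ᴴ := by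
        rw [conjTranspose_mul, conjTranspose_conjTranspose]
        rw [Matrix.mul_sub, Matrix.mul_one, Matrix.sub_mul, hE₁]
        have e2 : E₁ * E₀ᴴ * (E₀ * E₁ᴴ) = E₁ * (E₀ᴴ * E₀) * E₁ᴴ := by
          simp only [Matrix.mul_assoc]
        rw [e2]
      rw [e]
      exact hP0.mul_mul_conjTranspose_same E₁
    have hval : star ψ₀ ⬝ᵥ ψ₁ = (S * (E₁ * E₀ᴴ)).trace := by
      rw [dot_eq_trace]
      rw [show (Matrix.of fun a r => ψ₀ (a, r)) = M₀ from hM₀def.symm]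
      rw [show (Matrix.of fun a r => ψ₁ (a, r)) = M₁ from hM₁def.symm]
      rw [hM₀f, hM₁f]
      have e : (h₀.1.sqrt * E₀)ᴴ * (h₁.1.sqrt * E₁)
          = E₀ᴴ * (h₀.1.sqrt * (h₁.1.sqrt * E₁)) := by
        rw [conjTranspose_mul, hT0h]
        simp only [Matrix.mul_assoc]
      rw [e, Matrix.trace_mul_comm]
      have e2 : h₀.1.sqrt * (h₁.1.sqrt * E₁) * E₀ᴴ = S * (E₁ * E₀ᴴ) := by
        rw [hSdef]; simp only [Matrix.mul_assoc]
      rw [e2]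
    rw [hval, hfidQ]
    exact trace_mul_le_of_contraction hQ Ep hSpolar hEp hKK
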